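/- arXiv:1706.06084 — 5 statements merged into one kernel-verified Lean document; each statement's English description precedes it below -/
import Mathlib

section
/- Let Q be a k×n integer matrix of rank k, let d be an integer vector of length k, let I be a set of k linearly independent columns of Q, and let β be an integer vector of length n (an assignment to the n variables) such that Q β = d. Then for every column index v ∈ I, the entry of β at position v satisfies |β(v)| ≤ k! · (c_d + c_Q · Σ_{u ∉ I} |β(u)|) · c_Q^{k−1}, where c_Q and c_d are the maximum absolute values of entries of Q and d respectively, and the sum ranges over all column indices not in I. -/
/-!
Restricting `Q` to the columns in `I` gives a square integer matrix `M` with `det M ≠ 0`, and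
`M x = d'`, where `x = β|_I` and `d' = d - ∑_{u ∉ I} Q_u β(u)`. Cramer's rule gives
`det M • x = adj M · d'`; since `|det M| ≥ 1` for an integer matrix, each `|x_v|` is at most
`∑_i |adj M_{v i}| · max_i |d'_i|`. Every adjugate entry is a `(k-1)`-minor, hence at most
`(k-1)! c_Q^(k-1)` in absolute value, and `|d'_i| ≤ c_d + c_Q ∑_{u ∉ I} |β(u)|`.
-/

open Finset
open scoped Nat

namespace Matrix

section OrderedRing

variable {R : Type*} [CommRing R] [LinearOrder R] [IsStrictOrderedRing R]

theorem abs_adjugate_apply_le {m : ℕ} {A : Matrix (Fin (m + 1)) (Fin (m + 1)) R} {c : R}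
    (hA : ∀ i j, |A i j| ≤ c) (i j : Fin (m + 1)) : |A.adjugate i j| ≤ m ! * c ^ m := by
  rw [adjugate_fin_succ_eq_det_submatrix, abs_mul, abs_pow, abs_neg, abs_one, one_pow, one_mul]
  simpa using det_le (A := A.submatrix j.succAbove i.succAbove) (abv := AbsoluteValue.abs)
    fun a b => hA _ _

theorem sum_abs_adjugate_apply_le {m : ℕ} {A : Matrix (Fin (m + 1)) (Fin (m + 1)) R} {c : R}
    (hA : ∀ i j, |A i j| ≤ c) (i : Fin (m + 1)) :
    ∑ j, |A.adjugate i j| ≤ (m + 1)! * c ^ m :=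
  calc ∑ j, |A.adjugate i j| ≤ ∑ _j : Fin (m + 1), (m ! * c ^ m : R) :=
        sum_le_sum fun j _ => abs_adjugate_apply_le hA i j
    _ = (m + 1)! * c ^ m := by
        rw [sum_const, card_univ, Fintype.card_fin, nsmul_eq_mul, Nat.factorial_succ]
        push_cast
        ring

end OrderedRing

theorem det_ne_zero_of_linearIndependent_cols_map {ι R K : Type*} [Fintype ι] [DecidableEq ι]
    [CommRing R] [Field K] {f : R →+* K} {A : Matrix ι ι R}
    (hA : LinearIndependent K (A.map f).col) : A.det ≠ 0 := by
  have hunit : IsUnit (f A.det) := by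
    rw [RingHom.map_det]
    exact (isUnit_iff_isUnit_det _).mp (linearIndependent_cols_iff_isUnit.mp hA)
  exact fun h => hunit.ne_zero (by rw [h, map_zero])

theorem abs_le_of_mulVec_eq {m : ℕ} {A : Matrix (Fin (m + 1)) (Fin (m + 1)) ℤ}
    (hdet : A.det ≠ 0) {c D : ℤ} (hA : ∀ i j, |A i j| ≤ c) {x b : Fin (m + 1) → ℤ}
    (hAx : A *ᵥ x = b) (hb : ∀ i, |b i| ≤ D) (j : Fin (m + 1)) :
    |x j| ≤ (m + 1)! * D * c ^ m := by
  have hcramer : A.det * x j = ∑ i, A.adjugate j i * b i := by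
    have h : A.adjugate *ᵥ (A *ᵥ x) = A.adjugate *ᵥ b := by rw [hAx]
    rw [mulVec_mulVec, adjugate_mul, smul_mulVec, one_mulVec] at h
    exact congrFun h j
  have hD : 0 ≤ D := (abs_nonneg _).trans (hb 0)
  calc |x j| ≤ |A.det| * |x j| := le_mul_of_one_le_left (abs_nonneg _) (Int.one_le_abs hdet)
    _ = |∑ i, A.adjugate j i * b i| := by rw [← abs_mul, hcramer]
    _ ≤ ∑ i, |A.adjugate j i| * D := (abs_sum_le_sum_abs _ _).trans <|
        sum_le_sum fun i _ => by
          rw [abs_mul]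
          exact mul_le_mul_of_nonneg_left (hb i) (abs_nonneg _)
    _ = (∑ i, |A.adjugate j i|) * D := (sum_mul _ _ _).symm
    _ ≤ (m + 1)! * c ^ m * D := mul_le_mul_of_nonneg_right (sum_abs_adjugate_apply_le hA j) hD
    _ = (m + 1)! * D * c ^ m := by ring

theorem submatrix_mulVec_eq_sub_sum_compl {κ ι ι' R : Type*} [Fintype ι] [Fintype ι']
    [DecidableEq ι] [CommRing R] (Q : Matrix κ ι R) (s : Finset ι) (e : ι' ≃ s) (β : ι → R) :
    Q.submatrix id (fun j => (e j : ι)) *ᵥ (fun j => β (e j)) =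
      Q *ᵥ β - fun i => ∑ u ∈ sᶜ, Q i u * β u := by
  funext i
  have hsum : ∑ j, Q i (e j) * β (e j) = ∑ u ∈ s, Q i u * β u := by
    rw [← sum_coe_sort s]
    exact e.sum_comp fun u : s => Q i u * β u
  simp only [mulVec, dotProduct, submatrix_apply, id, Pi.sub_apply, hsum]
  rw [← sum_add_sum_compl s, add_sub_cancel_right]

end Matrix

theorem abs_sub_sum_mul_le {ι R : Type*} [CommRing R] [LinearOrder R] [IsStrictOrderedRing R]
    (s : Finset ι) {d c cd : R} {q β : ι → R} (hd : |d| ≤ cd) (hq : ∀ u, |q u| ≤ c) :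
    |d - ∑ u ∈ s, q u * β u| ≤ cd + c * ∑ u ∈ s, |β u| :=
  calc |d - ∑ u ∈ s, q u * β u| ≤ |d| + ∑ u ∈ s, |q u * β u| :=
        (abs_sub _ _).trans (add_le_add le_rfl (abs_sum_le_sum_abs _ _))
    _ ≤ cd + ∑ u ∈ s, c * |β u| := by
        gcongr with u
        rw [abs_mul]
        exact mul_le_mul_of_nonneg_right (hq u) (abs_nonneg _)
    _ = cd + c * ∑ u ∈ s, |β u| := by rw [mul_sum]

theorem stmt1_general (k n : ℕ) (Q : Matrix (Fin k) (Fin n) ℤ) (d : Fin k → ℤ)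
    (I : Finset (Fin n)) (hIcard : I.card = k)
    (hInd : LinearIndependent ℚ (fun j : I => fun i => ((Q i j.1 : ℤ) : ℚ)))
    (β : Fin n → ℤ) (hβ : Q.mulVec β = d)
    (cQ cd : ℤ) (hcQ : ∀ i j, |Q i j| ≤ cQ) (hcd : ∀ i, |d i| ≤ cd) :
    ∀ v ∈ I, |β v| ≤ (Nat.factorial k : ℤ) *
      (cd + cQ * ∑ u ∈ Iᶜ, |β u|) * cQ ^ (k - 1) := by
  intro v hv
  obtain ⟨m, rfl⟩ : ∃ m, k = m + 1 :=
    Nat.exists_eq_add_one.mpr (hIcard ▸ card_pos.mpr ⟨v, hv⟩)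
  let e : Fin (m + 1) ≃ I := (I.equivFinOfCardEq hIcard).symm
  have hdet : (Q.submatrix id (fun j => (e j : Fin n))).det ≠ 0 :=
    Matrix.det_ne_zero_of_linearIndependent_cols_map (f := Int.castRingHom ℚ)
      (hInd.comp e e.injective)
  have hMx := Q.submatrix_mulVec_eq_sub_sum_compl I e β
  rw [hβ] at hMx
  simpa using Matrix.abs_le_of_mulVec_eq hdet (fun i j => hcQ i _) hMx
    (fun i => abs_sub_sum_mul_le Iᶜ (hcd i) (hcQ i)) (e.symm ⟨v, hv⟩)

/-- bound on the entries of an integral assignment at a set of `k` linearly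
independent columns of a rank-`k` integer matrix `Q` satisfying `Q β = d`. -/
theorem stmt1 (k n : ℕ) (Q : Matrix (Fin k) (Fin n) ℤ) (d : Fin k → ℤ)
    (hrank : (Q.map (Int.cast : ℤ → ℚ)).rank = k)
    (I : Finset (Fin n)) (hIcard : I.card = k)
    (hInd : LinearIndependent ℚ (fun j : I => fun i => ((Q i j.1 : ℤ) : ℚ)))
    (β : Fin n → ℤ) (hβ : Q.mulVec β = d)
    (cQ cd : ℤ) (hcQ : ∀ i j, |Q i j| ≤ cQ) (hcd : ∀ i, |d i| ≤ cd) :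
    ∀ v ∈ I, |β v| ≤ (Nat.factorial k : ℤ) *
      (cd + cQ * ∑ u ∈ Iᶜ, |β u|) * cQ ^ (k - 1) :=
  stmt1_general k n Q d I hIcard hInd β hβ cQ cd hcQ hcd
end

section
/- Let A be an m×n integer matrix and k a positive integer. Suppose there is a set Z of at most k rows of A such that every connected component of the incidence graph of A after deleting the vertices in Z has at most k vertices. Then for every set D of columns of A that is linearly dependent, there exists a subset D′ ⊆ D with |D′| ≤ k(k+1) that is linearly dependent. -/
/-- The incidence graph of an integer matrix: a bipartite graph on rows and columns,
with row `i` adjacent to column `j` iff `A i j ≠ 0`. -/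
def incGraph {M N : Type*} (A : Matrix M N ℤ) : SimpleGraph (M ⊕ N) :=
  SimpleGraph.fromRel fun x y => ∃ i j, x = Sum.inl i ∧ y = Sum.inr j ∧ A i j ≠ 0

/-- Every connected component of `G` after deleting the vertex set `Z` has at most
`k` vertices. -/
def SmallComponents {V : Type*} (G : SimpleGraph V) (Z : Set V) (k : ℕ) : Prop :=
  ∀ c : (G.induce Zᶜ).ConnectedComponent, c.supp.ncard ≤ k

/-- A set `D` of columns of `A` is linearly dependent: there is a nonzero rational
vector supported on `D` that `A` maps to zero. -/
def ColsDependent {m n : ℕ} (A : Matrix (Fin m) (Fin n) ℤ) (D : Finset (Fin n)) : Prop :=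
  ∃ x : Fin n → ℚ, x ≠ 0 ∧ (∀ j, x j ≠ 0 → j ∈ D) ∧
    (A.map (Int.cast : ℤ → ℚ)).mulVec x = 0

/-! Every row outside `Z` meets the columns of a single component of the incidence graph minus
`Z`, so rescaling a kernel vector `x` by a constant on each component keeps those rows at zero.
The `#Z` remaining rows impose `#Z` linear conditions on the scalars, so on any `#Z + 1`
components met by `x` some nonzero choice of scalars gives a kernel vector again. It is supported
on at most `#Z + 1 ≤ k + 1` components, each holding at most `k` columns. -/

open Finset Module

namespace Matrix

variable {K ι κ C : Type*} [Field K] [Fintype κ]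

theorem mulVec_comp_mul_apply_eq_zero {M : Matrix ι κ K} {l : κ → C} (g : C → K) {x : κ → K}
    {i : ι} (hi : ∀ j j', M i j ≠ 0 → M i j' ≠ 0 → l j = l j') (hx : (M *ᵥ x) i = 0) :
    (M *ᵥ fun j => g (l j) * x j) i = 0 := by
  by_cases hrow : ∃ j₀, M i j₀ ≠ 0
  · obtain ⟨j₀, hj₀⟩ := hrow
    have : (M *ᵥ fun j => g (l j) * x j) i = g (l j₀) * (M *ᵥ x) i := by
      simp only [mulVec, dotProduct, Finset.mul_sum]
      refine Finset.sum_congr rfl fun j _ => ?_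
      by_cases hj : M i j = 0
      · simp [hj]
      · rw [hi j j₀ hj hj₀]; ring
    rw [this, hx, mul_zero]
  · push Not at hrow
    simp [mulVec, dotProduct, hrow]

theorem exists_mulVec_comp_mul_eq_zero {M : Matrix ι κ K} {l : κ → C} {Z : Finset ι}
    (hrow : ∀ i ∉ Z, ∀ j j', M i j ≠ 0 → M i j' ≠ 0 → l j = l j') {x : κ → K}
    (hx : M *ᵥ x = 0) {S : Finset C} (hS : #Z < #S) :
    ∃ g : C →₀ K, g ≠ 0 ∧ (∀ c, g c ≠ 0 → c ∈ S) ∧ M *ᵥ (fun j => g (l j) * x j) = 0 := by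
  let rescale : (C →₀ K) →ₗ[K] (κ → K) :=
    { toFun g j := g (l j) * x j
      map_add' _ _ := by ext; simp [add_mul]
      map_smul' _ _ := by ext; simp [mul_assoc] }
  let Φ := LinearMap.funLeft K K (Subtype.val : Z → ι) ∘ₗ M.mulVecLin ∘ₗ rescale ∘ₗ
    Finsupp.lmapDomain K K (Subtype.val : S → C)
  have hdim : finrank K (Z → K) < finrank K (S →₀ K) := by
    simpa only [Module.finrank_finsupp_self, Module.finrank_fintype_fun_eq_card,
      Fintype.card_coe] using hS
  obtain ⟨g, hgker, hg0⟩ := Submodule.exists_mem_ne_zero_of_ne_bot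
    (LinearMap.ker_ne_bot_of_finrank_lt (f := Φ) hdim)
  refine ⟨Finsupp.mapDomain Subtype.val g, ?_, ?_, funext fun i => ?_⟩
  · exact (Finsupp.mapDomain_injective Subtype.val_injective).ne_iff' Finsupp.mapDomain_zero
      |>.mpr hg0
  · intro c hc
    by_contra hcS
    exact hc (Finsupp.mapDomain_of_notMem_range _ _ (by simpa using hcS))
  by_cases hi : i ∈ Z
  · exact congrFun (LinearMap.mem_ker.mp hgker) ⟨i, hi⟩
  · exact mulVec_comp_mul_apply_eq_zero _ (hrow i hi) (congrFun hx i)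

theorem exists_mulVec_eq_zero_support_image_card_le [DecidableEq K] [DecidableEq C]
    {M : Matrix ι κ K} {l : κ → C} {Z : Finset ι}
    (hrow : ∀ i ∉ Z, ∀ j j', M i j ≠ 0 → M i j' ≠ 0 → l j = l j')
    {x : κ → K} (hx0 : x ≠ 0) (hx : M *ᵥ x = 0) :
    ∃ y : κ → K, y ≠ 0 ∧ M *ᵥ y = 0 ∧ (∀ j, y j ≠ 0 → x j ≠ 0) ∧
      #(({j | y j ≠ 0} : Finset κ).image l) ≤ #Z + 1 := by
  set S := ({j | x j ≠ 0} : Finset κ).image l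
  by_cases hS : #S ≤ #Z + 1
  · exact ⟨x, hx0, hx, fun _ => id, hS⟩
  obtain ⟨S', hS'S, hS'⟩ := Finset.exists_subset_card_eq (s := S) (n := #Z + 1) (by omega)
  obtain ⟨g, hg0, hgS', hgx⟩ := exists_mulVec_comp_mul_eq_zero hrow hx (S := S') (by omega)
  have hy : ∀ j, g (l j) * x j ≠ 0 → x j ≠ 0 ∧ l j ∈ S' := fun j hj =>
    ⟨right_ne_zero_of_mul hj, hgS' _ (left_ne_zero_of_mul hj)⟩
  refine ⟨fun j => g (l j) * x j, ?_, hgx, fun j hj => (hy j hj).1, ?_⟩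
  · obtain ⟨c, hc⟩ := Finsupp.ne_iff.mp hg0
    obtain ⟨j, hj, rfl⟩ := Finset.mem_image.mp (hS'S (hgS' c hc))
    exact Function.ne_iff.mpr ⟨j, mul_ne_zero hc (by simpa using hj)⟩
  · refine hS' ▸ Finset.card_le_card fun c hc => ?_
    obtain ⟨j, hj, rfl⟩ := Finset.mem_image.mp hc
    exact (hy j (by simpa using hj)).2

end Matrix

namespace incGraph

variable {M N : Type*} (A : Matrix M N ℤ) (Z : Set M)

def colComponent (j : N) : ((incGraph A).induce (Sum.inl '' Z)ᶜ).ConnectedComponent :=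
  ((incGraph A).induce (Sum.inl '' Z)ᶜ).connectedComponentMk ⟨Sum.inr j, by simp⟩

variable {A Z}

theorem colComponent_eq_of_ne_zero {i : M} (hi : i ∉ Z) {j j' : N} (hj : A i j ≠ 0)
    (hj' : A i j' ≠ 0) : colComponent A Z j = colComponent A Z j' := by
  have hrow : ∀ {j}, A i j ≠ 0 → colComponent A Z j =
      ((incGraph A).induce (Sum.inl '' Z)ᶜ).connectedComponentMk ⟨Sum.inl i, by simpa using hi⟩ :=
    fun hj => SimpleGraph.ConnectedComponent.sound <| SimpleGraph.Adj.reachable <| by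
      simpa [incGraph, SimpleGraph.fromRel_adj] using hj
  rw [hrow hj, hrow hj']

theorem card_le_of_forall_colComponent_eq [Finite M] [Finite N] {k : ℕ}
    (hZ : SmallComponents (incGraph A) (Sum.inl '' Z) k)
    {c : ((incGraph A).induce (Sum.inl '' Z)ᶜ).ConnectedComponent} {s : Finset N}
    (hs : ∀ j ∈ s, colComponent A Z j = c) : #s ≤ k :=
  calc #s = ((fun j : N => (⟨Sum.inr j, by simp⟩ : ↥(Sum.inl '' Z)ᶜ)) '' ↑s).ncard := by
        rw [Set.ncard_image_of_injective _ (fun a b h => by simpa using h), Set.ncard_coe_finset]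
    _ ≤ c.supp.ncard := Set.ncard_le_ncard (by rintro _ ⟨j, hj, rfl⟩; exact hs j hj)
          (Set.toFinite _)
    _ ≤ k := hZ c

end incGraph

theorem stmt2_general (m n k : ℕ) (A : Matrix (Fin m) (Fin n) ℤ)
    (Z : Finset (Fin m)) (hZcard : Z.card ≤ k)
    (hZ : SmallComponents (incGraph A) (Sum.inl '' (Z : Set (Fin m))) k)
    (D : Finset (Fin n)) (hD : ColsDependent A D) :
    ∃ D' ⊆ D, D'.card ≤ k * (k + 1) ∧ ColsDependent A D' := by
  classical
  obtain ⟨x, hx0, hxD, hAx⟩ := hD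
  have hrow : ∀ i ∉ Z, ∀ j j', A.map (Int.cast : ℤ → ℚ) i j ≠ 0 →
      A.map (Int.cast : ℤ → ℚ) i j' ≠ 0 →
        incGraph.colComponent A Z j = incGraph.colComponent A Z j' :=
    fun i hi j j' hj hj' => incGraph.colComponent_eq_of_ne_zero (by simpa using hi)
      (by simpa using hj) (by simpa using hj')
  obtain ⟨y, hy0, hAy, hyx, hclasses⟩ :=
    Matrix.exists_mulVec_eq_zero_support_image_card_le hrow hx0 hAx
  refine ⟨({j | y j ≠ 0} : Finset (Fin n)), fun j hj => hxD j (hyx j (by simpa using hj)), ?_,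
    y, hy0, fun j hj => by simpa using hj, hAy⟩
  calc #{j | y j ≠ 0}
      ≤ k * #(({j | y j ≠ 0} : Finset (Fin n)).image (incGraph.colComponent A Z)) :=
        Finset.card_le_mul_card_image _ _ fun _ _ =>
          incGraph.card_le_of_forall_colComponent_eq hZ fun _ hj => (Finset.mem_filter.mp hj).2
    _ ≤ k * (k + 1) := Nat.mul_le_mul_left _ (by omega)

/-- if `A` has a constraint backdoor `Z` (a set of at most `k` rows whose
deletion from the incidence graph leaves components of size at most `k`), then every linearly
dependent set of columns contains a linearly dependent subset of size at most `k(k+1)`. -/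
theorem stmt2 (m n k : ℕ) (hk : 0 < k) (A : Matrix (Fin m) (Fin n) ℤ)
    (Z : Finset (Fin m)) (hZcard : Z.card ≤ k)
    (hZ : SmallComponents (incGraph A) (Sum.inl '' (Z : Set (Fin m))) k)
    (D : Finset (Fin n)) (hD : ColsDependent A D) :
    ∃ D' ⊆ D, D'.card ≤ k * (k + 1) ∧ ColsDependent A D' :=
  stmt2_general m n k A Z hZcard hZ D hD
end

section
/- Let G be a finite graph with vertex set {1,…,n} and let p(i) denote the i-th prime number (p(1)=2). Then G is 3-colorable (its vertices can be colored with three colors so that no two adjacent vertices share a color) if and only if there exist positive integers c₁, c₂, c₃ such that: (1) for every vertex i ∈ {1,…,n}, exactly one of c₁, c₂, c₃ is divisible by p(i); and (2) for every edge {i,k} of G and every j ∈ {1,2,3}, it is not the case that both p(i) and p(k) divide c_j. -/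
/-! A proper `k`-coloring is encoded by the numbers `c j = ∏ {p v | v has color j}`: since the
`p v` are distinct primes, `p v ∣ c j` says exactly that `v` has color `j`. Conversely, coloring
`v` by the index `j` with `p v ∣ c j` is proper by the edge condition. -/

open Finset

lemma dvd_prod_of_injective_primes_iff {ι : Type*} {p : ι → ℕ} (hp : ∀ i, (p i).Prime)
    (hinj : Function.Injective p) (s : Finset ι) (i : ι) :
    p i ∣ ∏ k ∈ s, p k ↔ i ∈ s := by
  rw [(hp i).prime.dvd_finsetProd_iff]
  refine ⟨fun ⟨k, hk, hdvd⟩ => ?_, fun hi => ⟨i, hi, dvd_rfl⟩⟩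
  rwa [hinj ((Nat.prime_dvd_prime_iff_eq (hp i) (hp k)).mp hdvd)]

namespace SimpleGraph

variable {V : Type*} {G : SimpleGraph V}

lemma colorable_of_forall_exists {k : ℕ} (R : V → Fin k → Prop) (hR : ∀ v, ∃ j, R v j)
    (hadj : ∀ v w, G.Adj v w → ∀ j, ¬(R v j ∧ R w j)) : G.Colorable k := by
  choose f hf using hR
  exact ⟨Coloring.mk f fun {v w} h heq => hadj v w h (f v) ⟨hf v, heq ▸ hf w⟩⟩

section PrimeEncoding

variable [Fintype V] {p : V → ℕ}

lemma Coloring.dvd_prod_colorClass_iff {α : Type*} [DecidableEq α] (C : G.Coloring α)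
    (hp : ∀ v, (p v).Prime) (hinj : Function.Injective p) (v : V) (a : α) :
    p v ∣ ∏ w ∈ univ.filter (C · = a), p w ↔ C v = a := by
  simp [dvd_prod_of_injective_primes_iff hp hinj]

theorem colorable_iff_exists_prime_dvd (hp : ∀ v, (p v).Prime) (hinj : Function.Injective p)
    (k : ℕ) :
    G.Colorable k ↔
      ∃ c : Fin k → ℕ, (∀ j, 0 < c j) ∧ (∀ v, ∃! j, p v ∣ c j) ∧
        (∀ v w, G.Adj v w → ∀ j, ¬(p v ∣ c j ∧ p w ∣ c j)) := by
  constructor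
  · rintro ⟨C⟩
    refine ⟨fun j => ∏ w ∈ univ.filter (C · = j), p w,
      fun j => prod_pos fun w _ => (hp w).pos, fun v => ⟨C v, ?_, fun j hj => ?_⟩,
      fun v w h j ⟨hv, hw⟩ => ?_⟩
    · exact (C.dvd_prod_colorClass_iff hp hinj v _).mpr rfl
    · exact ((C.dvd_prod_colorClass_iff hp hinj v j).mp hj).symm
    · rw [C.dvd_prod_colorClass_iff hp hinj] at hv hw
      exact C.valid h (hv.trans hw.symm)
  · rintro ⟨c, -, huniq, hedge⟩
    exact colorable_of_forall_exists _ (fun v => (huniq v).exists) hedge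

end PrimeEncoding

end SimpleGraph

/-- a graph on vertices `{0, …, n-1}` is 3-colorable iff there are positive
integers `c 0, c 1, c 2` such that for every vertex `i` exactly one of them is divisible by
the `i`-th prime, and for every edge `{i, k}` no `c j` is divisible by both the `i`-th and
the `k`-th prime.  (`Nat.nth Nat.Prime i` is the `i`-th prime, with `Nat.nth Nat.Prime 0 = 2`.) -/
theorem stmt9 (n : ℕ) (G : SimpleGraph (Fin n)) :
    G.Colorable 3 ↔
      ∃ c : Fin 3 → ℕ, (∀ j, 0 < c j) ∧
        (∀ i : Fin n, ∃! j : Fin 3, Nat.nth Nat.Prime i ∣ c j) ∧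
        (∀ i k : Fin n, G.Adj i k → ∀ j : Fin 3,
          ¬(Nat.nth Nat.Prime i ∣ c j ∧ Nat.nth Nat.Prime k ∣ c j)) :=
  G.colorable_iff_exists_prime_dvd (fun i => Nat.prime_nth_prime i)
    ((Nat.nth_injective Nat.infinite_setOfPred_prime).comp Fin.val_injective) 3
end

section
/- Let G be a k-partite graph with vertex partition V₁,…,V_k, and for 1 ≤ i < j ≤ k let E_{i,j} denote the set of edges with one endpoint in V_i and the other in V_j. Let S : V(G) → ℕ be an injective Sidon labeling, i.e., for all vertices a, b, u, v with {a,b} ≠ {u,v}, we have S(a)+S(b) ≠ S(u)+S(v). Then G contains a clique with exactly one vertex in each part V₁,…,V_k if and only if there exist vertices c_i ∈ V_i for each i and edges d_{i,j} ∈ E_{i,j} for each pair i < j such that for every i < j, S(c_i) + S(c_j) = S(u) + S(v), where u and v are the endpoints of d_{i,j}. -/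
theorem SimpleGraph.Adj.of_sidon_sum_eq {V M : Type*} [Add M] {G : SimpleGraph V} {S : V → M}
    (hSidon : ∀ a b u v : V, S a + S b = S u + S v → (a = u ∧ b = v) ∨ (a = v ∧ b = u))
    {a b u v : V} (huv : G.Adj u v) (hsum : S a + S b = S u + S v) : G.Adj a b := by
  rcases hSidon a b u v hsum with ⟨rfl, rfl⟩ | ⟨rfl, rfl⟩
  · exact huv
  · exact huv.symm

theorem stmt10_general {V : Type*} (k : ℕ) (G : SimpleGraph V) (part : V → Fin k)
    (S : V → ℕ)
    (hSidon : ∀ a b u v : V, S a + S b = S u + S v → (a = u ∧ b = v) ∨ (a = v ∧ b = u)) :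
    (∃ c : Fin k → V, (∀ i, part (c i) = i) ∧ ∀ i j, i ≠ j → G.Adj (c i) (c j)) ↔
      (∃ c : Fin k → V, (∀ i, part (c i) = i) ∧
        ∀ i j : Fin k, i < j → ∃ u v : V, G.Adj u v ∧ part u = i ∧ part v = j ∧
          S (c i) + S (c j) = S u + S v) := by
  constructor
  · rintro ⟨c, hc, hadj⟩
    exact ⟨c, hc, fun i j hij => ⟨c i, c j, hadj i j hij.ne, hc i, hc j, rfl⟩⟩
  · rintro ⟨c, hc, hedge⟩
    have hadj_of_lt : ∀ i j, i < j → G.Adj (c i) (c j) := fun i j hij => by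
      obtain ⟨u, v, huv, -, -, hsum⟩ := hedge i j hij
      exact huv.of_sidon_sum_eq hSidon hsum
    refine ⟨c, hc, fun i j hij => ?_⟩
    rcases hij.lt_or_gt with hlt | hgt
    · exact hadj_of_lt i j hlt
    · exact (hadj_of_lt j i hgt).symm

/-- in a `k`-partite graph `G` (partition given by `part`, with no edge
inside a part) equipped with an injective Sidon labeling `S`, there is a multicolored clique
(one vertex per part, pairwise adjacent) iff one can select vertices `c i ∈ V_i` and, for
every pair of parts `i < j`, an edge between `V_i` and `V_j` whose endpoint labels sum to
`S (c i) + S (c j)`. -/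
theorem stmt10 {V : Type*} (k : ℕ) (G : SimpleGraph V) (part : V → Fin k)
    (hpart : ∀ u v, G.Adj u v → part u ≠ part v)
    (S : V → ℕ) (hinj : Function.Injective S)
    (hSidon : ∀ a b u v : V, S a + S b = S u + S v → (a = u ∧ b = v) ∨ (a = v ∧ b = u)) :
    (∃ c : Fin k → V, (∀ i, part (c i) = i) ∧ ∀ i j, i ≠ j → G.Adj (c i) (c j)) ↔
      (∃ c : Fin k → V, (∀ i, part (c i) = i) ∧
        ∀ i j : Fin k, i < j → ∃ u v : V, G.Adj u v ∧ part u = i ∧ part v = j ∧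
          S (c i) + S (c j) = S u + S v) :=
  stmt10_general k G part S hSidon
end

section
/- For every positive integer n there exists a strictly increasing sequence s₁ < s₂ < … < s_n of natural numbers with s_n ≤ 8n² that forms a Sidon sequence: whenever s_i + s_j = s_k + s_l with i ≤ j and k ≤ l, it holds that i = k and j = l. -/
/-!
Erdős–Turán: for a prime `p` the numbers `s x = 2 p x + (x² mod p)`, `x < p`, form a Sidon set.
Since the remainders are below `p`, the sum `s a + s b` has quotient `a + b` and remainder
`(a² mod p) + (b² mod p)` on division by `2 p`, so it determines `a + b` in `ℕ` and `a² + b²` in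
`ZMod p`. For odd `p` these determine `a b` up to order, as `2 a b = (a + b)² - (a² + b²)`.
Bertrand's postulate supplies such a prime with `n < p ≤ 4 n`, whence `s x < p (2 n) ≤ 8 n²`.
-/

theorem eq_or_eq_of_add_eq_add_of_sq_add_sq_eq {R : Type*} [CommRing R] [IsDomain R]
    (h2 : (2 : R) ≠ 0) {a b c d : R} (hsum : a + b = c + d)
    (hsq : a ^ 2 + b ^ 2 = c ^ 2 + d ^ 2) : a = c ∨ a = d := by
  have hprod : a * b = c * d :=
    mul_left_cancel₀ h2 (by linear_combination (a + b + c + d) * hsum - hsq)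
  have : (a - c) * (a - d) = 0 := by linear_combination a * hsum - hprod
  exact (mul_eq_zero.mp this).imp sub_eq_zero.mp sub_eq_zero.mp

def erdosTuran (p x : ℕ) : ℕ := 2 * p * x + x ^ 2 % p

namespace erdosTuran

variable {p : ℕ}

theorem lt_mul (hp : 0 < p) (x : ℕ) : erdosTuran p x < p * (2 * x + 1) := by
  have := Nat.mod_lt (x ^ 2) hp
  unfold erdosTuran
  linarith

theorem strictMono (hp : 0 < p) : StrictMono (erdosTuran p) :=
  strictMono_nat_of_lt_succ fun x =>
    calc erdosTuran p x < p * (2 * x + 1) := lt_mul hp x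
      _ ≤ 2 * p * (x + 1) := by nlinarith
      _ ≤ erdosTuran p (x + 1) := Nat.le_add_right _ _

theorem add_eq (a b : ℕ) :
    erdosTuran p a + erdosTuran p b = (a ^ 2 % p + b ^ 2 % p) + 2 * p * (a + b) := by
  unfold erdosTuran; ring

theorem sq_mod_add_sq_mod_lt (hp : 0 < p) (a b : ℕ) : a ^ 2 % p + b ^ 2 % p < 2 * p :=
  two_mul p ▸ Nat.add_lt_add (Nat.mod_lt _ hp) (Nat.mod_lt _ hp)

theorem add_div (hp : 0 < p) (a b : ℕ) :
    (erdosTuran p a + erdosTuran p b) / (2 * p) = a + b := by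
  rw [add_eq, Nat.add_mul_div_left _ _ (by omega),
    Nat.div_eq_of_lt (sq_mod_add_sq_mod_lt hp a b), zero_add]

theorem add_mod (hp : 0 < p) (a b : ℕ) :
    (erdosTuran p a + erdosTuran p b) % (2 * p) = a ^ 2 % p + b ^ 2 % p := by
  rw [add_eq, Nat.add_mul_mod_self_left, Nat.mod_eq_of_lt (sq_mod_add_sq_mod_lt hp a b)]

theorem eq_and_eq_of_add_eq_add (hp : p.Prime) (hp2 : p ≠ 2) {a b c d : ℕ}
    (ha : a < p) (hc : c < p) (hd : d < p) (hab : a ≤ b) (hcd : c ≤ d)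
    (h : erdosTuran p a + erdosTuran p b = erdosTuran p c + erdosTuran p d) :
    a = c ∧ b = d := by
  have := Fact.mk hp
  have hsum : a + b = c + d := by rw [← add_div hp.pos, h, add_div hp.pos]
  have hmod : a ^ 2 % p + b ^ 2 % p = c ^ 2 % p + d ^ 2 % p := by
    rw [← add_mod hp.pos, h, add_mod hp.pos]
  have hsum' : (a : ZMod p) + b = c + d := by exact_mod_cast congrArg (Nat.cast : ℕ → ZMod p) hsum
  have hsq : (a : ZMod p) ^ 2 + (b : ZMod p) ^ 2 = (c : ZMod p) ^ 2 + (d : ZMod p) ^ 2 := by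
    simpa [ZMod.natCast_mod] using congrArg (Nat.cast : ℕ → ZMod p) hmod
  have h2 : (2 : ZMod p) ≠ 0 := Ring.two_ne_zero (by rwa [ZMod.ringChar_zmod_n])
  have cast_inj {x y : ℕ} (hx : x < p) (hy : y < p) (hxy : (x : ZMod p) = y) : x = y :=
    ((ZMod.natCast_eq_natCast_iff x y p).mp hxy).eq_of_lt_of_lt hx hy
  rcases eq_or_eq_of_add_eq_add_of_sq_add_sq_eq h2 hsum' hsq with hac | had
  · have := cast_inj ha hc hac; omega
  · have := cast_inj ha hd had; omega

end erdosTuran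

theorem stmt11_general (n : ℕ) :
    ∃ s : Fin n → ℕ, StrictMono s ∧ (∀ i, s i ≤ 8 * n ^ 2) ∧
      ∀ i j k l : Fin n, i ≤ j → k ≤ l → s i + s j = s k + s l → i = k ∧ j = l := by
  obtain ⟨p, hp, hnp, hp4n⟩ := Nat.exists_prime_lt_and_le_two_mul (max n 2) (by omega)
  have hn : n < p := lt_of_le_of_lt (le_max_left n 2) hnp
  refine ⟨fun i => erdosTuran p i, (erdosTuran.strictMono hp.pos).comp Fin.val_strictMono,
    fun i => ?_, fun i j k l hij hkl h => ?_⟩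
  · have := i.2
    calc erdosTuran p i ≤ p * (2 * n) :=
          (erdosTuran.lt_mul hp.pos i).le.trans (Nat.mul_le_mul_left p (by omega))
      _ ≤ 4 * n * (2 * n) := Nat.mul_le_mul_right _ (by omega)
      _ = 8 * n ^ 2 := by ring
  · obtain ⟨hik, hjl⟩ := erdosTuran.eq_and_eq_of_add_eq_add hp (by omega)
      (i.2.trans hn) (k.2.trans hn) (l.2.trans hn) hij hkl h
    exact ⟨Fin.ext hik, Fin.ext hjl⟩

/-- for every `n > 0` there is a strictly increasing Sidon sequence
`s 0 < s 1 < … < s (n-1)` of naturals with all elements at most `8 n²`: whenever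
`s i + s j = s k + s l` with `i ≤ j` and `k ≤ l`, we have `i = k` and `j = l`. -/
theorem stmt11 (n : ℕ) (hn : 0 < n) :
    ∃ s : Fin n → ℕ, StrictMono s ∧ (∀ i, s i ≤ 8 * n ^ 2) ∧
      ∀ i j k l : Fin n, i ≤ j → k ≤ l → s i + s j = s k + s l → i = k ∧ j = l :=
  stmt11_general n
end
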